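/- Assume G is abelian. Let A be a discrete connection form with D-type domain U, s : V → P a section over V ⊆ B, N ≥ 2, and m_• = (m₀,…,m_N) a discrete loop in B (m_N = m₀) such that (m₀,m_k,m_{k+1}) ∈ V''⁽³⁾ for all k = 0,…,N−1. Then the discrete holonomy phase HP(m_•,q̄) does not depend on the starting point q̄ ∈ π⁻¹(m₀) and equals (∏_{k=1}^N A_s(m_{k-1},m_k))⁻¹. -/

import Mathlib

/-! The equivariance of `A` says that one step of the horizontal lift multiplies the gauge of the
lift with respect to the section `s` on the right by `A_s(m_k, m_{k+1})⁻¹`, whatever that gauge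
was. Starting from `q̄ = κ(s(m₀), q̄) • s(m₀)`, after `N` steps and by commutativity the lift is
`(κ(s(m₀), q̄) * (∏ A_s)⁻¹) • s(m₀) = (∏ A_s)⁻¹ • q̄`, and freeness identifies `κ(q̄, q_N)`. -/

section GroupAction

variable {G P : Type*} [Group G] [MulAction G P]

theorem eq_of_smul_eq_smul_of_free (hfree : ∀ (g : G) (q : P), g • q = q → g = 1)
    {a b : G} {x : P} (h : a • x = b • x) : a = b := by
  have hfix : (b⁻¹ * a) • x = x := by rw [mul_smul, h, inv_smul_smul]
  exact (inv_mul_eq_one.mp (hfree _ _ hfix)).symm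

theorem kappa_eq_of_smul_eq {B : Type*} {π : P → B} {κ : P → P → G}
    (hfree : ∀ (g : G) (q : P), g • q = q → g = 1)
    (hκ : ∀ q₀ q₁ : P, π q₀ = π q₁ → κ q₀ q₁ • q₀ = q₁)
    (hπ : ∀ (g : G) (q : P), π (g • q) = π q) {g : G} {q₀ q₁ : P} (h : g • q₀ = q₁) :
    κ q₀ q₁ = g :=
  eq_of_smul_eq_smul_of_free hfree <| by rw [hκ q₀ q₁ (h ▸ (hπ g q₀).symm), h]

theorem inv_smul_of_equivariant {A : P → P → G} {x y : P}
    (hA : ∀ g₀ g₁ : G, A (g₀ • x) (g₁ • y) = g₁ * A x y * g₀⁻¹) (g h : G) :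
    (A (g • x) (h • y))⁻¹ • h • y = (g * (A x y)⁻¹) • y := by
  rw [hA, smul_smul]
  congr 1
  simp only [mul_inv_rev, inv_inv]
  rw [mul_assoc, inv_mul_cancel_right]

end GroupAction

section CommGroupAction

variable {G P : Type*} [CommGroup G] [MulAction G P]

theorem lift_eq_smul_prod {B : Type*} {π : P → B} {A : P → P → G} {U : Set (P × P)}
    (hπ : ∀ q₀ q₁ : P, π q₀ = π q₁ → ∃ g : G, g • q₀ = q₁)
    (hAequiv : ∀ q₀ q₁ : P, (q₀, q₁) ∈ U → ∀ g₀ g₁ : G,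
      A (g₀ • q₀) (g₁ • q₁) = g₁ * A q₀ q₁ * g₀⁻¹)
    {N : ℕ} {σ q : ℕ → P} (hσ : ∀ k < N, (σ k, σ (k + 1)) ∈ U)
    (hlift : ∀ k < N, ∃ q' : P, π q' = π (σ (k + 1)) ∧ q (k + 1) = (A (q k) q')⁻¹ • q')
    {g : G} (hg : q 0 = g • σ 0) :
    ∀ k ≤ N, q k = (g * ((List.range k).map fun i => A (σ i) (σ (i + 1))).prod⁻¹) • σ k := by
  intro k hk
  induction k with
  | zero => simpa using hg
  | succ k ih =>
    obtain ⟨q', hq'π, hq'⟩ := hlift k hk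
    obtain ⟨h, rfl⟩ := hπ _ _ hq'π.symm
    rw [hq', ih (by omega), inv_smul_of_equivariant (hAequiv _ _ (hσ k hk)),
      List.range_succ, List.map_append, List.prod_append]
    simp only [List.map_cons, List.map_nil, List.prod_cons, List.prod_nil, mul_one, mul_inv]
    rw [mul_assoc]

end CommGroupAction

theorem discrete_holonomy_phase_abelian_connection_formula_general
    {G : Type*} [CommGroup G] {P : Type*} [MulAction G P] {B : Type*}
    (π : P → B)
    (hfree : ∀ (g : G) (q : P), g • q = q → g = 1)
    (hπ : ∀ q₀ q₁ : P, π q₀ = π q₁ ↔ ∃ g : G, g • q₀ = q₁)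
    (κ : P → P → G)
    (hκ : ∀ q₀ q₁ : P, π q₀ = π q₁ → κ q₀ q₁ • q₀ = q₁)
    (U : Set (P × P))
    (A : P → P → G)
    (hAequiv : ∀ q₀ q₁ : P, (q₀, q₁) ∈ U → ∀ g₀ g₁ : G,
      A (g₀ • q₀) (g₁ • q₁) = g₁ * A q₀ q₁ * g₀⁻¹)
    (V : Set B) (s : B → P) (hs : ∀ m ∈ V, π (s m) = m)
    (V'' : Set (B × B))
    (hV'' : V'' = {p : B × B | p.1 ∈ V ∧ p.2 ∈ V ∧ (s p.1, s p.2) ∈ U})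
    -- a discrete loop `m_•` with all triples `(m₀, m_k, m_{k+1})` in `V''⁽³⁾`
    (N : ℕ) (hN : 2 ≤ N) (m : ℕ → B) (hloop : m N = m 0)
    (htr : ∀ k < N, ∀ x ∈ ({m 0, m k, m (k + 1)} : Set B),
      ∀ y ∈ ({m 0, m k, m (k + 1)} : Set B), (x, y) ∈ V'')
    -- an arbitrary starting point `q̄ ∈ π⁻¹(m₀)` and the discrete horizontal
    -- lift `q_•` of `m_•` (with respect to `h_A`) starting at `q̄`
    (qbar : P) (hqbar : π qbar = m 0)
    (q : ℕ → P) (hq0 : q 0 = qbar)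
    (hlift : ∀ k < N, ∃ q' : P, π q' = m (k + 1) ∧ (q k, q') ∈ U ∧
      q (k + 1) = (A (q k) q')⁻¹ • q') :
    κ qbar (q N)
      = (((List.range N).map (fun k => A (s (m k)) (s (m (k + 1))))).prod)⁻¹ := by
  have hstep : ∀ k < N, m k ∈ V ∧ m (k + 1) ∈ V ∧ (s (m k), s (m (k + 1))) ∈ U := fun k hk => by
    simpa [hV''] using htr k hk (m k) (by simp) (m (k + 1)) (by simp)
  have hm0 : π (s (m 0)) = π qbar := by rw [hs _ (hstep 0 (by omega)).1, hqbar]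
  have hπsmul : ∀ (g : G) (x : P), π (g • x) = π x := fun g x => ((hπ _ _).2 ⟨g, rfl⟩).symm
  have hqN := lift_eq_smul_prod (fun q₀ q₁ => (hπ q₀ q₁).1) hAequiv (fun k hk => (hstep k hk).2.2)
    (fun k hk => by
      obtain ⟨q', hq'π, -, hq'⟩ := hlift k hk
      exact ⟨q', by rw [hq'π, hs _ (hstep k hk).2.1], hq'⟩)
    (hq0.trans (hκ _ _ hm0).symm) N le_rfl
  refine kappa_eq_of_smul_eq hfree hκ hπsmul ?_
  rw [hqN, hloop, mul_comm, mul_smul, hκ _ _ hm0]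

/-- for an abelian structure group `G`, the discrete holonomy
phase `HP(m_•,q̄) = κ(q̄, q_N)` around a discrete loop `m_•` (with all triples
`(m₀,m_k,m_{k+1})` in `V''⁽³⁾`) does not depend on the starting point
`q̄ ∈ π⁻¹(m₀)` and equals `(∏_{k=1}^N A_s(m_{k-1},m_k))⁻¹`. -/
theorem discrete_holonomy_phase_abelian_connection_formula
    {G : Type*} [CommGroup G] {P : Type*} [MulAction G P] {B : Type*}
    (π : P → B)
    (hfree : ∀ (g : G) (q : P), g • q = q → g = 1)
    (hπ : ∀ q₀ q₁ : P, π q₀ = π q₁ ↔ ∃ g : G, g • q₀ = q₁)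
    (κ : P → P → G)
    (hκ : ∀ q₀ q₁ : P, π q₀ = π q₁ → κ q₀ q₁ • q₀ = q₁)
    (U : Set (P × P))
    (hUinv : ∀ q₀ q₁ : P, (q₀, q₁) ∈ U → ∀ g₀ g₁ : G, (g₀ • q₀, g₁ • q₁) ∈ U)
    (hUvert : ∀ q₀ q₁ : P, π q₀ = π q₁ → (q₀, q₁) ∈ U)
    (A : P → P → G)
    (hAid : ∀ q : P, A q q = 1)
    (hAequiv : ∀ q₀ q₁ : P, (q₀, q₁) ∈ U → ∀ g₀ g₁ : G,
      A (g₀ • q₀) (g₁ • q₁) = g₁ * A q₀ q₁ * g₀⁻¹)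
    (V : Set B) (s : B → P) (hs : ∀ m ∈ V, π (s m) = m)
    (V'' : Set (B × B))
    (hV'' : V'' = {p : B × B | p.1 ∈ V ∧ p.2 ∈ V ∧ (s p.1, s p.2) ∈ U})
    -- a discrete loop `m_•` with all triples `(m₀, m_k, m_{k+1})` in `V''⁽³⁾`
    (N : ℕ) (hN : 2 ≤ N) (m : ℕ → B) (hloop : m N = m 0)
    (htr : ∀ k < N, ∀ x ∈ ({m 0, m k, m (k + 1)} : Set B),
      ∀ y ∈ ({m 0, m k, m (k + 1)} : Set B), (x, y) ∈ V'')
    -- an arbitrary starting point `q̄ ∈ π⁻¹(m₀)` and the discrete horizontal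
    -- lift `q_•` of `m_•` (with respect to `h_A`) starting at `q̄`
    (qbar : P) (hqbar : π qbar = m 0)
    (q : ℕ → P) (hq0 : q 0 = qbar)
    (hlift : ∀ k < N, ∃ q' : P, π q' = m (k + 1) ∧ (q k, q') ∈ U ∧
      q (k + 1) = (A (q k) q')⁻¹ • q') :
    κ qbar (q N)
      = (((List.range N).map (fun k => A (s (m k)) (s (m (k + 1))))).prod)⁻¹ :=
  discrete_holonomy_phase_abelian_connection_formula_general π hfree hπ κ hκ U A hAequiv V s hs V''
    hV'' N hN m hloop htr qbar hqbar q hq0 hlift
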